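/- Let m ≥ 2, let M be an m × m diagonal integer matrix with nonzero determinant and first diagonal entry M₁₁, regarded as an injective endomorphism of ℤᵐ, and let G = ℤᵐ ∗_M be the corresponding ascending HNN-extension with stable letter t and canonical embedding of : ℤᵐ → G. Let e₁ ∈ ℤᵐ be the first standard basis vector. Then there is an injective group homomorphism from the Baumslag–Solitar group BS(1, M₁₁) = ⟨a, s ∣ s⁻¹ a s = a^{M₁₁}⟩ into G sending a ↦ of(e₁) and s ↦ t, whose image is the subgroup ⟨of(e₁), t⟩ of G; in particular, ⟨of(e₁), t⟩ ≅ BS(1, M₁₁). -/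

import Mathlib

/-- The ascending HNN-extension `G∗_φ` of a group `G` along an injective endomorphism
`φ : G → G`: the HNN extension of `G` with associated subgroups `φ.range` and `⊤`, with
the isomorphism `φ.range ≃* ⊤` induced by `φ`, so that the defining relation is
`t⁻¹ g t = φ g` for all `g ∈ G` (`of : G → G∗_φ` is the canonical embedding and `t` the
stable letter). -/
noncomputable abbrev AscendingHNN {G : Type} [Group G] (φ : G →* G)
    (hφ : Function.Injective φ) : Type :=
  HNNExtension G φ.range ⊤ ((Subgroup.topEquiv.trans (MonoidHom.ofInjective hφ)).symm)

/-- The endomorphism of the free-abelian group `ℤᵐ` (written multiplicatively as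
`Multiplicative (Fin m → ℤ)`) induced by an `m × m` integer matrix `M`, `u ↦ u M`. -/
def matHom {m : ℕ} (M : Matrix (Fin m) (Fin m) ℤ) :
    Multiplicative (Fin m → ℤ) →* Multiplicative (Fin m → ℤ) :=
  AddMonoidHom.toMultiplicative (Matrix.vecMulLinear M).toAddMonoidHom

/-- The single relator `s⁻¹ a s a⁻ⁿ` of the Baumslag–Solitar group `BS(1, n)`, `n : ℤ`,
where `a = FreeGroup.of true` and `s = FreeGroup.of false`. -/
def BSRels (n : ℤ) : Set (FreeGroup Bool) :=
  {(FreeGroup.of false)⁻¹ * FreeGroup.of true * FreeGroup.of false *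
    (FreeGroup.of true ^ n)⁻¹}

/-- The Baumslag–Solitar group `BS(1, n) = ⟨a, s ∣ s⁻¹ a s = aⁿ⟩`, presented as the
quotient of the free group on two generators by the normal closure of `s⁻¹ a s a⁻ⁿ`. -/
def BS (n : ℤ) : Type := PresentedGroup (BSRels n)

instance (n : ℤ) : Group (BS n) := by unfold BS; infer_instance

/-!
Since `M` is diagonal, `of e₁ ↦ of (e₁ ^ M₁₁)` under conjugation by `t`, so `a ↦ of e₁`, `s ↦ t`
defines `ψ : BS(1, M₁₁) → G`. The first coordinate `ℤᵐ → ℤ` intertwines `M` with multiplication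
by `M₁₁`, so `of u ↦ a ^ u₁`, `t ↦ s` defines a homomorphism `G → BS(1, M₁₁)` by the universal
property of the HNN extension; it is a left inverse of `ψ`, hence `ψ` is injective.
-/

namespace AscendingHNN

open HNNExtension

variable {G H : Type} [Group G] [Group H] {φ : G →* G} (hφ : Function.Injective φ)

theorem symm_apply_apply (g : G) :
    (((Subgroup.topEquiv.trans (MonoidHom.ofInjective hφ)).symm ⟨φ g, g, rfl⟩ :
      (⊤ : Subgroup G)) : G) = g :=
  hφ (MonoidHom.apply_ofInjective_symm hφ ⟨φ g, g, rfl⟩)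

theorem t_mul_of (g : G) :
    (t * of (φ g) : AscendingHNN φ hφ) = of g * t := by
  simpa only [symm_apply_apply] using
    HNNExtension.t_mul_of (φ := (Subgroup.topEquiv.trans (MonoidHom.ofInjective hφ)).symm)
      ⟨φ g, g, rfl⟩

theorem inv_t_mul_of_mul_t (g : G) :
    (t⁻¹ * of g * t : AscendingHNN φ hφ) = of (φ g) := by
  rw [mul_assoc, ← t_mul_of, inv_mul_cancel_left]

noncomputable def lift (F : G →* H) (x : H) (hx : ∀ g, x * F (φ g) = F g * x) :
    AscendingHNN φ hφ →* H :=
  HNNExtension.lift F x <| by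
    rintro ⟨-, g, rfl⟩
    rw [symm_apply_apply]
    exact hx g

variable (F : G →* H) (x : H) (hx : ∀ g, x * F (φ g) = F g * x)

@[simp]
theorem lift_of (g : G) : lift hφ F x hx (of g) = F g :=
  HNNExtension.lift_of _ _ _ _

@[simp]
theorem lift_t : lift hφ F x hx t = x :=
  HNNExtension.lift_t _ _ _

end AscendingHNN

namespace BS

variable {n : ℤ} {H : Type} [Group H]

variable (n) in
def a : BS n := PresentedGroup.of true

variable (n) in
def s : BS n := PresentedGroup.of false

theorem inv_s_mul_a_mul_s : (s n)⁻¹ * a n * s n = a n ^ n := by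
  have h := PresentedGroup.one_of_mem (rels := BSRels n) rfl
  simp only [map_mul, map_inv, map_zpow] at h
  exact mul_inv_eq_one.mp h

theorem a_zpow_mul_s (z : ℤ) : a n ^ z * s n = s n * a n ^ (n * z) := by
  have h := conj_zpow (a := (s n)⁻¹) (b := a n) (i := z)
  rw [inv_inv] at h
  rw [zpow_mul, ← inv_s_mul_a_mul_s, h]
  group

@[ext]
theorem hom_ext {f g : BS n →* H} (ha : f (a n) = g (a n)) (hs : f (s n) = g (s n)) :
    f = g :=
  PresentedGroup.ext fun b => by cases b <;> assumption

def lift (x y : H) (h : y⁻¹ * x * y = x ^ n) : BS n →* H :=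
  PresentedGroup.toGroup (f := fun b => cond b x y) <| by
    rintro _ rfl
    simp [h]

variable (x y : H) (h : y⁻¹ * x * y = x ^ n)

@[simp]
theorem lift_a : lift x y h (a n) = x :=
  PresentedGroup.toGroup.of _

@[simp]
theorem lift_s : lift x y h (s n) = y :=
  PresentedGroup.toGroup.of _

theorem closure_a_s : Subgroup.closure {a n, s n} = ⊤ :=
  top_le_iff.1 <| (PresentedGroup.closure_range_of (BSRels n)).ge.trans <|
    Subgroup.closure_mono <| by
      rintro _ ⟨_ | _, rfl⟩
      exacts [Or.inr rfl, Or.inl rfl]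

theorem range_lift : (lift x y h).range = Subgroup.closure {x, y} := by
  rw [MonoidHom.range_eq_map, ← closure_a_s, MonoidHom.map_closure, Set.image_pair, lift_a,
    lift_s]

end BS

section Embedding

open HNNExtension

variable {G : Type} [Group G] {φ : G →* G} (hφ : Function.Injective φ) {n : ℤ} {e : G}
  (hφe : φ e = e ^ n)

noncomputable def bsToAscendingHNN : BS n →* AscendingHNN φ hφ :=
  BS.lift (of e) t <| by rw [AscendingHNN.inv_t_mul_of_mul_t, hφe, map_zpow]

@[simp]
theorem bsToAscendingHNN_a : bsToAscendingHNN hφ hφe (BS.a n) = of e :=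
  BS.lift_a _ _ _

@[simp]
theorem bsToAscendingHNN_s : bsToAscendingHNN hφ hφe (BS.s n) = t :=
  BS.lift_s _ _ _

theorem range_bsToAscendingHNN :
    (bsToAscendingHNN hφ hφe).range = Subgroup.closure {of e, t} :=
  BS.range_lift _ _ _

theorem bsToAscendingHNN_injective (p : G →* Multiplicative ℤ)
    (hpe : p e = Multiplicative.ofAdd 1) (hpφ : ∀ g, p (φ g) = p g ^ n) :
    Function.Injective (bsToAscendingHNN hφ hφe) := by
  let r : AscendingHNN φ hφ →* BS n :=
    AscendingHNN.lift hφ ((zpowersHom (BS n) (BS.a n)).comp p) (BS.s n) fun g => by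
      simp [hpφ, BS.a_zpow_mul_s]
  have hr : r.comp (bsToAscendingHNN hφ hφe) = MonoidHom.id (BS n) := by
    ext <;> simp [r, hpe]
  exact Function.LeftInverse.injective (DFunLike.congr_fun hr)

end Embedding

theorem Matrix.IsDiag.vecMul_apply {m R : Type} [Fintype m] [DecidableEq m]
    [NonUnitalNonAssocSemiring R] {M : Matrix m m R} (hM : M.IsDiag) (v : m → R) (j : m) :
    vecMul v M j = v j * M j j := by
  rw [← hM.diagonal_diag, vecMul_diagonal, diagonal_apply_eq]

section DiagonalMatrix

variable {m : ℕ} {M : Matrix (Fin m) (Fin m) ℤ}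

theorem matHom_single_of_isDiag (hM : M.IsDiag) (i : Fin m) :
    matHom M (Multiplicative.ofAdd (Pi.single i 1)) =
      Multiplicative.ofAdd (Pi.single i 1) ^ M i i := by
  apply Multiplicative.toAdd.injective
  ext j
  by_cases hj : j = i
  · subst hj; simp [matHom]
  · simp [matHom, hj, hM (Ne.symm hj)]

theorem eval_matHom_of_isDiag (hM : M.IsDiag) (i : Fin m) (u : Multiplicative (Fin m → ℤ)) :
    AddMonoidHom.toMultiplicative (Pi.evalAddMonoidHom _ i) (matHom M u) =
      AddMonoidHom.toMultiplicative (Pi.evalAddMonoidHom _ i) u ^ M i i := by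
  apply Multiplicative.toAdd.injective
  change Matrix.vecMul _ M i = M i i • _
  rw [hM.vecMul_apply, smul_eq_mul, mul_comm]
  rfl

end DiagonalMatrix

/-- Let `m ≥ 2`, let `M` be an `m × m` diagonal integer matrix with nonzero determinant,
regarded as an injective endomorphism of `ℤᵐ`, let `G = ℤᵐ ∗_M`, and let `e₁` be the
first standard basis vector of `ℤᵐ`. Then there is an injective group homomorphism
`BS(1, M₁₁) → G` sending `a ↦ of(e₁)` and `s ↦ t`, whose image is the subgroup
`⟨of(e₁), t⟩` of `G`; in particular `⟨of(e₁), t⟩ ≅ BS(1, M₁₁)`. -/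
theorem bs_embeds_in_ascendingHNN_freeAbelian (m : ℕ) (hm : 2 ≤ m)
    (M : Matrix (Fin m) (Fin m) ℤ) (hdiag : M.IsDiag)
    (hinj : Function.Injective (matHom M)) :
    ∃ ψ : BS (M ⟨0, by omega⟩ ⟨0, by omega⟩) →* AscendingHNN (matHom M) hinj,
      Function.Injective ψ ∧
      ψ (PresentedGroup.of true) =
        HNNExtension.of
          (Multiplicative.ofAdd (Pi.single (⟨0, by omega⟩ : Fin m) 1 : Fin m → ℤ)) ∧
      ψ (PresentedGroup.of false) = HNNExtension.t ∧
      ψ.range = Subgroup.closure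
        {HNNExtension.of
            (Multiplicative.ofAdd (Pi.single (⟨0, by omega⟩ : Fin m) 1 : Fin m → ℤ)),
          HNNExtension.t} := by
  have hφe := matHom_single_of_isDiag hdiag ⟨0, by omega⟩
  refine ⟨bsToAscendingHNN hinj hφe, ?_, bsToAscendingHNN_a hinj hφe,
    bsToAscendingHNN_s hinj hφe, range_bsToAscendingHNN hinj hφe⟩
  exact bsToAscendingHNN_injective hinj hφe _ (by simp) (eval_matHom_of_isDiag hdiag _)
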